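/- Let A, B, C, D, E, F ∈ ℝ⁴ with A ≠ B, and suppose the four signed volumes V(A,B,D,F,E), V(A,B,C,E,F), V(A,B,C,F,D), V(A,B,C,D,E) are all nonzero. For X ∈ {C, D, E, F} let f_X : ℝ⁴ → ℝ, f_X(v) = S_{ABX}(v)², and Df_X(0) its derivative at 0. Then a quadruple of reals (λ_C, λ_D, λ_E, λ_F) satisfies λ_C·Df_C(0)(w) + λ_D·Df_D(0)(w) + λ_E·Df_E(0)(w) + λ_F·Df_F(0)(w) = 0 for all w orthogonal to B − A if and only if (λ_C, λ_D, λ_E, λ_F) is a scalar multiple of (V(A,B,D,F,E), V(A,B,C,E,F), V(A,B,C,F,D), V(A,B,C,D,E)); that is, the space of linear dependences among the four differentials restricted to the orthogonal complement of B − A is exactly one-dimensional. -/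

import Mathlib

/-- Area of the triangle with vertices `P`, `Q`, `R`. -/
noncomputable def triArea {n : ℕ} (P Q R : EuclideanSpace ℝ (Fin n)) : ℝ :=
  (1/2) * Real.sqrt (‖Q - P‖^2 * ‖R - P‖^2 - (inner ℝ (Q - P) (R - P) : ℝ)^2)

/-- Midpoint of two points. -/
noncomputable def mid {n : ℕ} (P Q : EuclideanSpace ℝ (Fin n)) : EuclideanSpace ℝ (Fin n) :=
  (1/2 : ℝ) • (P + Q)

/-- Orthogonal projection ℝ⁴ → ℝ³ onto the first three coordinates. -/
noncomputable def proj (x : EuclideanSpace ℝ (Fin 4)) : EuclideanSpace ℝ (Fin 3) :=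
  (WithLp.equiv 2 (Fin 3 → ℝ)).symm fun i => x i.castSucc

/-- Inclusion ℝ³ → ℝ⁴, (v₁,v₂,v₃) ↦ (v₁,v₂,v₃,0). -/
noncomputable def lift (v : EuclideanSpace ℝ (Fin 3)) : EuclideanSpace ℝ (Fin 4) :=
  (WithLp.equiv 2 (Fin 4 → ℝ)).symm (Fin.snoc (WithLp.equiv 2 (Fin 3 → ℝ) v) 0)

/-- Signed volume of the 4-simplex `P₀P₁P₂P₃P₄`. -/
noncomputable def vol4 (P₀ P₁ P₂ P₃ P₄ : EuclideanSpace ℝ (Fin 4)) : ℝ :=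
  (1/24) * Matrix.det (Matrix.of fun i j => ![P₁ - P₀, P₂ - P₀, P₃ - P₀, P₄ - P₀] j i)

/-- Unsigned volume of the tetrahedron `Q₀Q₁Q₂Q₃` in ℝ³. -/
noncomputable def vol3 (Q₀ Q₁ Q₂ Q₃ : EuclideanSpace ℝ (Fin 3)) : ℝ :=
  (1/6) * |Matrix.det (Matrix.of fun i j => ![Q₁ - Q₀, Q₂ - Q₀, Q₃ - Q₀] j i)|

/-- Deviated area of triangle ABX for a deviation v of edge AB. -/
noncomputable def devArea (A B X v : EuclideanSpace ℝ (Fin 4)) : ℝ :=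
  4 * triArea (mid B X) (mid X A) (mid A B + v)

/-- Determinant of the Jacobian matrix at 0 of a map ℝ³ → ℝ³. -/
noncomputable def jacDet (f : EuclideanSpace ℝ (Fin 3) → (Fin 3 → ℝ)) : ℝ :=
  Matrix.det (Matrix.of fun i j => fderiv ℝ f 0 (EuclideanSpace.single j 1) i)

local notation "E4" => EuclideanSpace ℝ (Fin 4)

private lemma det_fin_four' (M : Matrix (Fin 4) (Fin 4) ℝ) :
    M.det =
      M 0 0*(M 1 1*(M 2 2*M 3 3 - M 2 3*M 3 2) - M 1 2*(M 2 1*M 3 3 - M 2 3*M 3 1) + M 1 3*(M 2 1*M 3 2 - M 2 2*M 3 1))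
    - M 0 1*(M 1 0*(M 2 2*M 3 3 - M 2 3*M 3 2) - M 1 2*(M 2 0*M 3 3 - M 2 3*M 3 0) + M 1 3*(M 2 0*M 3 2 - M 2 2*M 3 0))
    + M 0 2*(M 1 0*(M 2 1*M 3 3 - M 2 3*M 3 1) - M 1 1*(M 2 0*M 3 3 - M 2 3*M 3 0) + M 1 3*(M 2 0*M 3 1 - M 2 1*M 3 0))
    - M 0 3*(M 1 0*(M 2 1*M 3 2 - M 2 2*M 3 1) - M 1 1*(M 2 0*M 3 2 - M 2 2*M 3 0) + M 1 2*(M 2 0*M 3 1 - M 2 1*M 3 0)) := by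
  rw [Matrix.det_succ_row_zero]
  simp [Fin.sum_univ_succ, Matrix.det_fin_three, Fin.succAbove]
  ring

private lemma devArea_sq (A B X v : E4) :
    devArea A B X v ^ 2 =
      ‖A - B‖^2 * ‖(1/2 : ℝ) • (A - X) + v‖^2
        - (inner ℝ (A - B) ((1/2 : ℝ) • (A - X) + v) : ℝ)^2 := by
  have hQP : mid X A - mid B X = (1/2 : ℝ) • (A - B) := by
    simp [mid]; module
  have hRP : mid A B + v - mid B X = (1/2 : ℝ) • (A - X) + v := by
    simp [mid]; module
  have hCS : (0:ℝ) ≤ ‖mid X A - mid B X‖^2 * ‖mid A B + v - mid B X‖^2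
      - (inner ℝ (mid X A - mid B X) (mid A B + v - mid B X) : ℝ)^2 := by
    have := real_inner_mul_inner_self_le (mid X A - mid B X) (mid A B + v - mid B X)
    rw [real_inner_self_eq_norm_sq, real_inner_self_eq_norm_sq] at this
    nlinarith [this]
  rw [devArea, triArea]
  rw [mul_pow, mul_pow, Real.sq_sqrt hCS, hQP, hRP]
  rw [norm_smul, real_inner_smul_left]
  simp
  ring

private lemma fderiv_devArea_sq (A B X w : E4) (hw : (inner ℝ w (B - A) : ℝ) = 0) :
    fderiv ℝ (fun v => devArea A B X v ^ 2) 0 w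
      = ‖A - B‖^2 * (inner ℝ (A - X) w : ℝ) := by
  set a : E4 := A - B with ha
  set u : E4 := (1/2 : ℝ) • (A - X) with hu
  have hfun : (fun v : E4 => devArea A B X v ^ 2)
      = fun v => ‖a‖^2 * (inner ℝ (u + v) (u + v) : ℝ)
          - (inner ℝ a (u + v) : ℝ) * (inner ℝ a (u + v) : ℝ) := by
    funext v
    rw [devArea_sq, real_inner_self_eq_norm_sq]
    ring
  have h_id : HasFDerivAt (fun v : E4 => u + v) (ContinuousLinearMap.id ℝ E4) 0 := by
    simpa using (hasFDerivAt_id (0 : E4)).const_add u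
  have h1 := (h_id.inner ℝ h_id).const_mul (‖a‖^2)
  have h2 := (hasFDerivAt_const a (0 : E4)).inner ℝ h_id
  have h3 := h1.sub (h2.mul h2)
  rw [hfun, HasFDerivAt.fderiv (f := fun v => ‖a‖^2 * (inner ℝ (u + v) (u + v) : ℝ)
          - (inner ℝ a (u + v) : ℝ) * (inner ℝ a (u + v) : ℝ)) h3]
  have haw : (inner ℝ a w : ℝ) = 0 := by
    rw [ha, show A - B = -(B - A) by abel, inner_neg_left, real_inner_comm, hw, neg_zero]
  simp only [ContinuousLinearMap.sub_apply, ContinuousLinearMap.add_apply,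
    ContinuousLinearMap.smul_apply, ContinuousLinearMap.comp_apply,
    ContinuousLinearMap.prod_apply, ContinuousLinearMap.id_apply,
    ContinuousLinearMap.zero_apply, fderivInnerCLM_apply, add_zero,
    inner_zero_left, haw, smul_eq_mul]
  simp only [hu, real_inner_smul_left, real_inner_smul_right, real_inner_comm w (A - X)]
  ring

private lemma cramer_vec (A B C D E F : E4) :
    (vol4 A B D F E) • (A - C) + (vol4 A B C E F) • (A - D)
      + (vol4 A B C F D) • (A - E) + (vol4 A B C D E) • (A - F)
      = (vol4 A C D E F) • (B - A) := by
  ext i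
  fin_cases i <;>
    · simp [vol4, det_fin_four', PiLp.sub_apply, PiLp.add_apply, PiLp.smul_apply, smul_eq_mul]
      ring

/-- when the four volumes are nonzero, the space of linear dependences among
the four differentials dS²_{ABC}, dS²_{ABD}, dS²_{ABE}, dS²_{ABF} restricted to the
orthogonal complement of B − A is exactly the line spanned by
(V(A,B,D,F,E), V(A,B,C,E,F), V(A,B,C,F,D), V(A,B,C,D,E)). -/
theorem deviation_dependence_unique
    (A B C D E F : EuclideanSpace ℝ (Fin 4)) (hAB : A ≠ B)
    (h₁ : vol4 A B D F E ≠ 0) (h₂ : vol4 A B C E F ≠ 0)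
    (h₃ : vol4 A B C F D ≠ 0) (h₄ : vol4 A B C D E ≠ 0)
    (lC lD lE lF : ℝ) :
    (∀ w : EuclideanSpace ℝ (Fin 4), (inner ℝ w (B - A) : ℝ) = 0 →
      lC * fderiv ℝ (fun v => devArea A B C v ^ 2) 0 w +
      lD * fderiv ℝ (fun v => devArea A B D v ^ 2) 0 w +
      lE * fderiv ℝ (fun v => devArea A B E v ^ 2) 0 w +
      lF * fderiv ℝ (fun v => devArea A B F v ^ 2) 0 w = 0) ↔
    (∃ c : ℝ, lC = c * vol4 A B D F E ∧ lD = c * vol4 A B C E F ∧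
              lE = c * vol4 A B C F D ∧ lF = c * vol4 A B C D E) := by
  have hnorm : ‖A - B‖ ≠ 0 := by
    simpa [sub_eq_zero] using hAB
  set s : E4 := lC • (A - C) + lD • (A - D) + lE • (A - E) + lF • (A - F) with hs_def
  have hkey : ∀ w : E4, (inner ℝ w (B - A) : ℝ) = 0 →
      lC * fderiv ℝ (fun v => devArea A B C v ^ 2) 0 w +
      lD * fderiv ℝ (fun v => devArea A B D v ^ 2) 0 w +
      lE * fderiv ℝ (fun v => devArea A B E v ^ 2) 0 w +
      lF * fderiv ℝ (fun v => devArea A B F v ^ 2) 0 w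
        = ‖A - B‖^2 * (inner ℝ s w : ℝ) := by
    intro w hw
    rw [fderiv_devArea_sq A B C w hw, fderiv_devArea_sq A B D w hw,
      fderiv_devArea_sq A B E w hw, fderiv_devArea_sq A B F w hw]
    have : (inner ℝ s w : ℝ) = lC * (inner ℝ (A - C) w : ℝ) + lD * (inner ℝ (A - D) w : ℝ)
        + lE * (inner ℝ (A - E) w : ℝ) + lF * (inner ℝ (A - F) w : ℝ) := by
      simp only [hs_def, inner_add_left, real_inner_smul_left]
    rw [this]; ring
  have step1 : (∀ w : E4, (inner ℝ w (B - A) : ℝ) = 0 →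
      lC * fderiv ℝ (fun v => devArea A B C v ^ 2) 0 w +
      lD * fderiv ℝ (fun v => devArea A B D v ^ 2) 0 w +
      lE * fderiv ℝ (fun v => devArea A B E v ^ 2) 0 w +
      lF * fderiv ℝ (fun v => devArea A B F v ^ 2) 0 w = 0)
      ↔ (∀ w : E4, (inner ℝ w (B - A) : ℝ) = 0 → (inner ℝ s w : ℝ) = 0) := by
    apply forall_congr'
    intro w
    constructor
    · intro h hw
      have := h hw
      rw [hkey w hw] at this
      exact (mul_eq_zero.mp this).resolve_left (pow_ne_zero 2 hnorm)
    · intro h hw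
      rw [hkey w hw, h hw, mul_zero]
  have step2 : (∀ w : E4, (inner ℝ w (B - A) : ℝ) = 0 → (inner ℝ s w : ℝ) = 0)
      ↔ ∃ t : ℝ, s = t • (B - A) := by
    constructor
    · intro h
      have hmem : s ∈ ((ℝ ∙ (B - A))ᗮ)ᗮ := by
        rw [Submodule.mem_orthogonal]
        intro u hu
        rw [real_inner_comm]
        exact h u (Submodule.mem_orthogonal_singleton_iff_inner_left.mp hu)
      rw [Submodule.orthogonal_orthogonal] at hmem
      rcases Submodule.mem_span_singleton.mp hmem with ⟨t, ht⟩
      exact ⟨t, ht.symm⟩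
    · rintro ⟨t, hst⟩ w hw
      rw [hst, real_inner_smul_left, real_inner_comm w (B - A), hw, mul_zero]
  rw [step1, step2]
  constructor
  · rintro ⟨t, hst⟩
    have hi : ∀ i : Fin 4,
        lC * (A i - C i) + lD * (A i - D i) + lE * (A i - E i) + lF * (A i - F i)
          = t * (B i - A i) := by
      intro i
      have h' := congrArg (fun x : E4 => x i) hst
      simpa [hs_def, PiLp.add_apply, PiLp.smul_apply, PiLp.sub_apply, smul_eq_mul] using h'
    have hC' : lC * vol4 A B C D E = lF * vol4 A B D F E := by
      have e0 := hi 0; have e1 := hi 1; have e2 := hi 2; have e3 := hi 3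
      simp only [vol4, det_fin_four', Matrix.of_apply, Matrix.cons_val', Matrix.cons_val_zero,
        Matrix.cons_val_one, Matrix.head_cons, Matrix.head_fin_const, Matrix.cons_val_fin_one,
        Matrix.empty_val', Matrix.cons_val_two, Matrix.tail_cons, Matrix.cons_val_three,
        PiLp.sub_apply]
      linear_combination
        (((1:ℝ)/24) * ((B 1 - A 1)*((D 2 - A 2)*(E 3 - A 3) - (D 3 - A 3)*(E 2 - A 2)) - (D 1 - A 1)*((B 2 - A 2)*(E 3 - A 3) - (B 3 - A 3)*(E 2 - A 2)) + (E 1 - A 1)*((B 2 - A 2)*(D 3 - A 3) - (B 3 - A 3)*(D 2 - A 2)))) * e0 +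
        ((-(1:ℝ)/24) * ((B 0 - A 0)*((D 2 - A 2)*(E 3 - A 3) - (D 3 - A 3)*(E 2 - A 2)) - (D 0 - A 0)*((B 2 - A 2)*(E 3 - A 3) - (B 3 - A 3)*(E 2 - A 2)) + (E 0 - A 0)*((B 2 - A 2)*(D 3 - A 3) - (B 3 - A 3)*(D 2 - A 2)))) * e1 +
        (((1:ℝ)/24) * ((B 0 - A 0)*((D 1 - A 1)*(E 3 - A 3) - (D 3 - A 3)*(E 1 - A 1)) - (D 0 - A 0)*((B 1 - A 1)*(E 3 - A 3) - (B 3 - A 3)*(E 1 - A 1)) + (E 0 - A 0)*((B 1 - A 1)*(D 3 - A 3) - (B 3 - A 3)*(D 1 - A 1)))) * e2 +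
        ((-(1:ℝ)/24) * ((B 0 - A 0)*((D 1 - A 1)*(E 2 - A 2) - (D 2 - A 2)*(E 1 - A 1)) - (D 0 - A 0)*((B 1 - A 1)*(E 2 - A 2) - (B 2 - A 2)*(E 1 - A 1)) + (E 0 - A 0)*((B 1 - A 1)*(D 2 - A 2) - (B 2 - A 2)*(D 1 - A 1)))) * e3
    have hD' : lD * vol4 A B C D E = lF * vol4 A B C E F := by
      have e0 := hi 0; have e1 := hi 1; have e2 := hi 2; have e3 := hi 3
      simp only [vol4, det_fin_four', Matrix.of_apply, Matrix.cons_val', Matrix.cons_val_zero,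
        Matrix.cons_val_one, Matrix.head_cons, Matrix.head_fin_const, Matrix.cons_val_fin_one,
        Matrix.empty_val', Matrix.cons_val_two, Matrix.tail_cons, Matrix.cons_val_three,
        PiLp.sub_apply]
      linear_combination
        ((-(1:ℝ)/24) * ((B 1 - A 1)*((C 2 - A 2)*(E 3 - A 3) - (C 3 - A 3)*(E 2 - A 2)) - (C 1 - A 1)*((B 2 - A 2)*(E 3 - A 3) - (B 3 - A 3)*(E 2 - A 2)) + (E 1 - A 1)*((B 2 - A 2)*(C 3 - A 3) - (B 3 - A 3)*(C 2 - A 2)))) * e0 +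
        (((1:ℝ)/24) * ((B 0 - A 0)*((C 2 - A 2)*(E 3 - A 3) - (C 3 - A 3)*(E 2 - A 2)) - (C 0 - A 0)*((B 2 - A 2)*(E 3 - A 3) - (B 3 - A 3)*(E 2 - A 2)) + (E 0 - A 0)*((B 2 - A 2)*(C 3 - A 3) - (B 3 - A 3)*(C 2 - A 2)))) * e1 +
        ((-(1:ℝ)/24) * ((B 0 - A 0)*((C 1 - A 1)*(E 3 - A 3) - (C 3 - A 3)*(E 1 - A 1)) - (C 0 - A 0)*((B 1 - A 1)*(E 3 - A 3) - (B 3 - A 3)*(E 1 - A 1)) + (E 0 - A 0)*((B 1 - A 1)*(C 3 - A 3) - (B 3 - A 3)*(C 1 - A 1)))) * e2 +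
        (((1:ℝ)/24) * ((B 0 - A 0)*((C 1 - A 1)*(E 2 - A 2) - (C 2 - A 2)*(E 1 - A 1)) - (C 0 - A 0)*((B 1 - A 1)*(E 2 - A 2) - (B 2 - A 2)*(E 1 - A 1)) + (E 0 - A 0)*((B 1 - A 1)*(C 2 - A 2) - (B 2 - A 2)*(C 1 - A 1)))) * e3
    have hE' : lE * vol4 A B C D E = lF * vol4 A B C F D := by
      have e0 := hi 0; have e1 := hi 1; have e2 := hi 2; have e3 := hi 3
      simp only [vol4, det_fin_four', Matrix.of_apply, Matrix.cons_val', Matrix.cons_val_zero,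
        Matrix.cons_val_one, Matrix.head_cons, Matrix.head_fin_const, Matrix.cons_val_fin_one,
        Matrix.empty_val', Matrix.cons_val_two, Matrix.tail_cons, Matrix.cons_val_three,
        PiLp.sub_apply]
      linear_combination
        (((1:ℝ)/24) * ((B 1 - A 1)*((C 2 - A 2)*(D 3 - A 3) - (C 3 - A 3)*(D 2 - A 2)) - (C 1 - A 1)*((B 2 - A 2)*(D 3 - A 3) - (B 3 - A 3)*(D 2 - A 2)) + (D 1 - A 1)*((B 2 - A 2)*(C 3 - A 3) - (B 3 - A 3)*(C 2 - A 2)))) * e0 +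
        ((-(1:ℝ)/24) * ((B 0 - A 0)*((C 2 - A 2)*(D 3 - A 3) - (C 3 - A 3)*(D 2 - A 2)) - (C 0 - A 0)*((B 2 - A 2)*(D 3 - A 3) - (B 3 - A 3)*(D 2 - A 2)) + (D 0 - A 0)*((B 2 - A 2)*(C 3 - A 3) - (B 3 - A 3)*(C 2 - A 2)))) * e1 +
        (((1:ℝ)/24) * ((B 0 - A 0)*((C 1 - A 1)*(D 3 - A 3) - (C 3 - A 3)*(D 1 - A 1)) - (C 0 - A 0)*((B 1 - A 1)*(D 3 - A 3) - (B 3 - A 3)*(D 1 - A 1)) + (D 0 - A 0)*((B 1 - A 1)*(C 3 - A 3) - (B 3 - A 3)*(C 1 - A 1)))) * e2 +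
        ((-(1:ℝ)/24) * ((B 0 - A 0)*((C 1 - A 1)*(D 2 - A 2) - (C 2 - A 2)*(D 1 - A 1)) - (C 0 - A 0)*((B 1 - A 1)*(D 2 - A 2) - (B 2 - A 2)*(D 1 - A 1)) + (D 0 - A 0)*((B 1 - A 1)*(C 2 - A 2) - (B 2 - A 2)*(C 1 - A 1)))) * e3
    refine ⟨lF / vol4 A B C D E, ?_, ?_, ?_, ?_⟩
    · field_simp
      linear_combination hC'
    · field_simp
      linear_combination hD'
    · field_simp
      linear_combination hE'
    · field_simp
  · rintro ⟨c, hC, hD, hE, hF⟩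
    refine ⟨c * vol4 A C D E F, ?_⟩
    rw [hs_def, hC, hD, hE, hF]
    calc (c * vol4 A B D F E) • (A - C) + (c * vol4 A B C E F) • (A - D)
          + (c * vol4 A B C F D) • (A - E) + (c * vol4 A B C D E) • (A - F)
        = c • ((vol4 A B D F E) • (A - C) + (vol4 A B C E F) • (A - D)
            + (vol4 A B C F D) • (A - E) + (vol4 A B C D E) • (A - F)) := by module
      _ = c • ((vol4 A C D E F) • (B - A)) := by rw [cramer_vec]
      _ = (c * vol4 A C D E F) • (B - A) := by rw [smul_smul]
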